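/- arXiv:2006.02249 — 5 statements merged into one kernel-verified Lean document; each statement's English description precedes it below -/
import Mathlib

section
/- Let (T,σ) be a leaf-colored tree explaining a best match graph, and let x, y be leaves with σ(x) ≠ σ(y). Let v_x, v_y be the children of lca(x,y) with x ⪯ v_x and y ⪯ v_y. Then x and y are reciprocal best matches (i.e., xy is an edge of the BMG) if and only if σ(x) ∉ σ(L(T(v_y))) and σ(y) ∉ σ(L(T(v_x))). -/
/-- A finite rooted tree, given by a parent function: every vertex reaches the
root along the parent chain. -/
structure PTree (V : Type*) where
  parent : V → Option V
  root : V
  root_parent : parent root = none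
  connected : ∀ v : V, Relation.ReflTransGen (fun a b => parent a = some b) v root

namespace PTree

variable {V C : Type*}

/-- `T.anc a b` : `b` is an ancestor of `a` (i.e. `a ⪯ b` in the ancestor order). -/
def anc (T : PTree V) (a b : V) : Prop :=
  Relation.ReflTransGen (fun x y => T.parent x = some y) a b

/-- `v` is a child of `u`. -/
def child (T : PTree V) (v u : V) : Prop := T.parent v = some u

/-- A leaf is a vertex without children. -/
def isLeaf (T : PTree V) (v : V) : Prop := ∀ w, ¬ T.child w v

/-- `u` is the last common ancestor of `x` and `y`. -/
def isLCA (T : PTree V) (u x y : V) : Prop :=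
  T.anc x u ∧ T.anc y u ∧ ∀ w, T.anc x w → T.anc y w → T.anc u w

/-- `σ(L(T(v)))` : the set of colors of the leaves of the subtree rooted at `v`. -/
def leafColors (T : PTree V) (σ : V → C) (v : V) : Set C :=
  {c | ∃ x, T.isLeaf x ∧ T.anc x v ∧ σ x = c}

/-- `y` is a best match of `x` in `(T,σ)`. -/
def bestMatch (T : PTree V) (σ : V → C) (x y : V) : Prop :=
  T.isLeaf x ∧ T.isLeaf y ∧ σ x ≠ σ y ∧
    ∀ y', T.isLeaf y' → σ y' = σ y →
      ∀ u u', T.isLCA u x y → T.isLCA u' x y' → T.anc u u'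

/-- `x` and `y` are reciprocal best matches, i.e. `xy` is an edge of the BMG `G(T,σ)`. -/
def edge (T : PTree V) (σ : V → C) (x y : V) : Prop :=
  T.bestMatch σ x y ∧ T.bestMatch σ y x

/-- Every inner vertex (other than the planted root) has exactly two children. -/
def Binary (T : PTree V) : Prop :=
  ∀ u : V, u ≠ T.root → ¬ T.isLeaf u →
    ∃ v₁ v₂, v₁ ≠ v₂ ∧ T.child v₁ u ∧ T.child v₂ u ∧
      ∀ w, T.child w u → w = v₁ ∨ w = v₂

/-- Adjacency in the color-set intersection graph `𝔠_T(u)`. -/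
def csiAdj (T : PTree V) (σ : V → C) (u a b : V) : Prop :=
  a ≠ b ∧ T.child a u ∧ T.child b u ∧ (T.leafColors σ a ∩ T.leafColors σ b).Nonempty

/-- `a` and `b` lie in the same connected component of `𝔠_T(u)`. -/
def sameComp (T : PTree V) (σ : V → C) (u a b : V) : Prop :=
  Relation.ReflTransGen (T.csiAdj σ u) a b

/-- `S` is a connected component of `𝔠_T(u)` with more than one element. -/
def IsBigComp (T : PTree V) (σ : V → C) (u : V) (S : Set V) : Prop :=
  (∃ a, T.child a u ∧ S = {b | T.sameComp σ u a b}) ∧ ∃ a ∈ S, ∃ b ∈ S, a ≠ b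

end PTree

/-- `(T, σT)` explains the colored digraph `(E, σ)` on the gene set `L`, with
`ι` identifying the genes with the leaves of `T`. -/
def Explains {V L C : Type*} (T : PTree V) (ι : L → V) (σT : V → C) (σ : L → C)
    (E : L → L → Prop) : Prop :=
  Function.Injective ι ∧ (∀ l, T.isLeaf (ι l)) ∧ (∀ v, T.isLeaf v → ∃ l, ι l = v) ∧
    (∀ l, σT (ι l) = σ l) ∧ ∀ x y, E x y ↔ T.bestMatch σT (ι x) (ι y)

/-- The parent function after contracting the edge `uv` (with `v` a child of `u`). -/
def contractedParent {V : Type*} [DecidableEq V] (T : PTree V) (u v w : V) : Option V :=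
  (T.parent w).map (fun p => if p = v then u else p)

/-- One step towards the contracted parent when contracting all edges whose lower
endpoints form the set `A`. -/
def multiContractStep {V : Type*} (T : PTree V) (A : Set V) (a b : V) : Prop :=
  T.parent a = some b ∧ b ∈ A

/-- Event types for inner vertices of an event-labeled gene tree. -/
inductive Event : Type
  | speciation
  | duplication

section Aux

variable {V C : Type*}

lemma PTree.acyclic (T : PTree V) (a : V) :
    ¬ Relation.TransGen (fun p q => T.parent p = some q) a a := by
  have h := T.connected a
  induction h using Relation.ReflTransGen.head_induction_on with
  | refl =>
    intro hcyc
    obtain ⟨b, hb, -⟩ := (Relation.TransGen.head'_iff).mp hcyc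
    simp [T.root_parent] at hb
  | head step h2 IH =>
    rename_i a₀ a₁
    intro hcyc
    obtain ⟨c, hc, hrest⟩ := (Relation.TransGen.head'_iff).mp hcyc
    rw [step] at hc
    obtain rfl : a₁ = c := Option.some.inj hc
    exact IH (Relation.TransGen.tail' hrest step)

lemma PTree.anc_antisymm (T : PTree V) {a b : V} (h1 : T.anc a b) (h2 : T.anc b a) :
    a = b := by
  by_contra hne
  rcases h1.cases_head with rfl | ⟨c, hc, hcb⟩
  · exact hne rfl
  · exact T.acyclic a (Relation.TransGen.head' hc (hcb.trans h2))

lemma PTree.anc_comparable (T : PTree V) {a b c : V} (h1 : T.anc a b) (h2 : T.anc a c) :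
    T.anc b c ∨ T.anc c b := by
  induction h1 using Relation.ReflTransGen.head_induction_on with
  | refl => exact Or.inl h2
  | head step h1' IH =>
    rename_i a₀ a₁
    rcases h2.cases_head with rfl | ⟨d, hd, hdc⟩
    · exact Or.inr (Relation.ReflTransGen.head step h1')
    · rw [step] at hd
      obtain rfl : a₁ = d := Option.some.inj hd
      exact IH hdc

lemma PTree.exists_lca (T : PTree V) (a b : V) : ∃ u, T.isLCA u a b := by
  have h := T.connected a
  induction h using Relation.ReflTransGen.head_induction_on with
  | refl => exact ⟨T.root, Relation.ReflTransGen.refl, T.connected b, fun w hw _ => hw⟩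
  | head step h2 IH =>
    rename_i a₀ a₁
    by_cases hb : T.anc b a₀
    · exact ⟨a₀, Relation.ReflTransGen.refl, hb, fun w hw _ => hw⟩
    · obtain ⟨u, hu1, hu2, hu3⟩ := IH
      refine ⟨u, Relation.ReflTransGen.head step hu1, hu2, fun w hw hbw => ?_⟩
      rcases hw.cases_head with rfl | ⟨d, hd, hdw⟩
      · exact absurd hbw hb
      · rw [step] at hd
        obtain rfl : a₁ = d := Option.some.inj hd
        exact hu3 w hdw hbw

lemma PTree.lca_swap (T : PTree V) {u a b : V} (h : T.isLCA u a b) : T.isLCA u b a :=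
  ⟨h.2.1, h.1, fun w h1 h2 => h.2.2 w h2 h1⟩

lemma PTree.lca_unique (T : PTree V) {u u' a b : V} (h : T.isLCA u a b)
    (h' : T.isLCA u' a b) : u = u' :=
  T.anc_antisymm (h.2.2 u' h'.1 h'.2.1) (h'.2.2 u h.1 h.2.1)

/-- If `u'` lies on the chain from `x` and below `u`, where `v` is the child of `u`
above `x`, then `u' ⪯ v` or `u' = u`. -/
lemma PTree.below_or_eq (T : PTree V) {x v u u' : V} (hv : T.child v u)
    (hxv : T.anc x v) (hxu' : T.anc x u') (hu'u : T.anc u' u) :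
    T.anc u' v ∨ u' = u := by
  rcases T.anc_comparable hxu' hxv with h | h
  · exact Or.inl h
  · rcases h.cases_head with rfl | ⟨d, hd, hdu'⟩
    · exact Or.inl Relation.ReflTransGen.refl
    · rw [hv] at hd
      obtain rfl : u = d := Option.some.inj hd
      exact Or.inr (T.anc_antisymm hu'u hdu')

end Aux

/-- For leaves `x`, `y` of different colors, `xy` is an edge of the
BMG `G(T,σ)` iff `σ(x) ∉ σ(L(T(v_y)))` and `σ(y) ∉ σ(L(T(v_x)))`, where `v_x, v_y`
are the children of `lca(x,y)` above `x` and `y`. -/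
theorem stmt_1 {V C : Type*} [Fintype V] (T : PTree V) (σ : V → C) (x y u vx vy : V)
    (hx : T.isLeaf x) (hy : T.isLeaf y) (hσ : σ x ≠ σ y)
    (hu : T.isLCA u x y) (hvx : T.child vx u) (hvy : T.child vy u)
    (hxvx : T.anc x vx) (hyvy : T.anc y vy) :
    T.edge σ x y ↔ (σ x ∉ T.leafColors σ vy ∧ σ y ∉ T.leafColors σ vx) := by
  constructor
  · rintro ⟨hbm, hbm'⟩
    constructor
    · rintro ⟨x', hx'l, hx'anc, hx'c⟩
      obtain ⟨w, hw⟩ := T.exists_lca y x'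
      have h1 : T.anc u w := hbm'.2.2.2 x' hx'l hx'c u w (T.lca_swap hu) hw
      have hwvy : T.anc w vy := hw.2.2 vy hyvy hx'anc
      have huvy : u = vy := T.anc_antisymm (h1.trans hwvy) (Relation.ReflTransGen.single hvy)
      rw [huvy] at hvy
      exact T.acyclic vy (Relation.TransGen.single hvy)
    · rintro ⟨y', hy'l, hy'anc, hy'c⟩
      obtain ⟨w, hw⟩ := T.exists_lca x y'
      have h1 : T.anc u w := hbm.2.2.2 y' hy'l hy'c u w hu hw
      have hwvx : T.anc w vx := hw.2.2 vx hxvx hy'anc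
      have huvx : u = vx := T.anc_antisymm (h1.trans hwvx) (Relation.ReflTransGen.single hvx)
      rw [huvx] at hvx
      exact T.acyclic vx (Relation.TransGen.single hvx)
  · rintro ⟨hA, hB⟩
    constructor
    · refine ⟨hx, hy, hσ, fun y' hy'l hy'c u₀ u' h₀ h' => ?_⟩
      obtain rfl : u₀ = u := T.lca_unique h₀ hu
      rcases T.anc_comparable hu.1 h'.1 with h | h
      · exact h
      · rcases T.below_or_eq hvx hxvx h'.1 h with hv | rfl
        · exact absurd ⟨y', hy'l, h'.2.1.trans hv, hy'c⟩ hB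
        · exact Relation.ReflTransGen.refl
    · refine ⟨hy, hx, hσ.symm, fun x' hx'l hx'c u₀ u' h₀ h' => ?_⟩
      obtain rfl : u₀ = u := T.lca_unique h₀ (T.lca_swap hu)
      rcases T.anc_comparable hu.2.1 h'.1 with h | h
      · exact h
      · rcases T.below_or_eq hvy hyvy h'.1 h with hv | rfl
        · exact absurd ⟨x', hx'l, h'.2.1.trans hv, hx'c⟩ hA
        · exact Relation.ReflTransGen.refl
end

section
/- Let (T,σ) be a leaf-colored tree explaining the BMG G(T,σ), and let ab|b' be an informative triple for G(T,σ), i.e., σ(a) ≠ σ(b) = σ(b'), (a,b) is an arc of G(T,σ) and (a,b') is not an arc. Then T displays the triple ab|b', i.e., lca_T(a,b) ≺ lca_T(a,b') = lca_T(b,b'). -/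
namespace PTree

variable {V' C' : Type*}

lemma step_ru (T : PTree V') : Relator.RightUnique (fun x y => T.parent x = some y) :=
  fun _ _ _ h1 h2 => Option.some.inj (h1.symm.trans h2)

lemma anc_total (T : PTree V') {x u w : V'} (h1 : T.anc x u) (h2 : T.anc x w) :
    T.anc u w ∨ T.anc w u :=
  Relation.ReflTransGen.total_of_right_unique T.step_ru h1 h2

lemma anc_antisymm' (T : PTree V') :
    ∀ a, T.anc a T.root → ∀ b, T.anc a b → T.anc b a → a = b := by
  intro a hc
  induction hc using Relation.ReflTransGen.head_induction_on with
  | refl =>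
    intro b h1 _
    rcases Relation.ReflTransGen.cases_head h1 with rfl | ⟨c, hs, _⟩
    · rfl
    · rw [T.root_parent] at hs; exact absurd hs (by simp)
  | head hs hcr ih =>
    rename_i a' c
    intro b h1 h2
    rcases Relation.ReflTransGen.cases_head h1 with rfl | ⟨d, hd, hdb⟩
    · rfl
    · have : d = c := T.step_ru hd hs
      subst this
      by_cases hbc : b = d
      · subst hbc
        exact (ih a' h2 (Relation.ReflTransGen.single hs)).symm
      · exact absurd (ih b hdb (h2.trans (Relation.ReflTransGen.single hs))) (Ne.symm hbc)

lemma anc_antisymm_s2 (T : PTree V') {a b : V'} (h1 : T.anc a b) (h2 : T.anc b a) : a = b :=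
  T.anc_antisymm' a (T.connected a) b h1 h2

lemma lca_unique_s2 (T : PTree V') {u v x y : V'} (h1 : T.isLCA u x y) (h2 : T.isLCA v x y) :
    u = v :=
  T.anc_antisymm_s2 (h1.2.2 v h2.1 h2.2.1) (h2.2.2 u h1.1 h1.2.1)

end PTree

/-- Every informative triple `ab|b'` for `G(T,σ)` is displayed by `T`:
`lca(a,b) ≺ lca(a,b') = lca(b,b')`. -/
theorem stmt_2 {V C : Type*} [Fintype V] (T : PTree V) (σ : V → C) (a b b' : V)
    (ha : T.isLeaf a) (hb : T.isLeaf b) (hb' : T.isLeaf b') (hbne : b ≠ b')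
    (hab : σ a ≠ σ b) (hbb' : σ b = σ b')
    (harc : T.bestMatch σ a b) (hnarc : ¬ T.bestMatch σ a b')
    (u u' w : V) (hu : T.isLCA u a b) (hu' : T.isLCA u' a b') (hw : T.isLCA w b b') :
    T.anc u u' ∧ u ≠ u' ∧ u' = w := by
  have hab' : σ a ≠ σ b' := fun h => hab (h.trans hbb'.symm)
  have huu' : T.anc u u' := harc.2.2.2 b' hb' hbb'.symm u u' hu hu'
  have hne : u ≠ u' := by
    intro he
    apply hnarc
    refine ⟨ha, hb', hab', ?_⟩
    intro y' hy' hcy' v v' hv hv'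
    have hvu : v = u' := T.lca_unique_s2 hv hu'
    have : T.anc u v' := harc.2.2.2 y' hy' (hcy'.trans hbb'.symm) u v' hu hv'
    rw [hvu, ← he]
    exact this
  rcases T.anc_total hu.2.1 hw.1 with huw | hwu
  · have haw : T.anc a w := hu.1.trans huw
    have hu'w : T.anc u' w := hu'.2.2 w haw hw.2.1
    have hwu' : T.anc w u' := hw.2.2 u' (hu.2.1.trans huu') hu'.2.1
    exact ⟨huu', hne, T.anc_antisymm_s2 hu'w hwu'⟩
  · have hb'u : T.anc b' u := hw.2.1.trans hwu
    have hu'u : T.anc u' u := hu'.2.2 u hu.1 hb'u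
    exact absurd (T.anc_antisymm_s2 huu' hu'u) hne
end

section
/- If T_A is obtained from a leaf-colored tree (T,σ) by contracting all edges in a set A of inner edges of T (in any order), then every arc of G(T,σ) is also an arc of G(T_A,σ), i.e., G(T,σ) ⊆ G(T_A,σ). -/
namespace Stmt6Aux

variable {V C : Type*}

lemma step_det (T : PTree V) {a b c : V} (h1 : T.parent a = some b)
    (h2 : T.parent a = some c) : b = c := by
  rw [h1] at h2; exact Option.some.inj h2

/-- One step of iterating the parent function on `Option V`. -/
private def g (T : PTree V) : Option V → Option V := fun o => o.bind T.parent

lemma iter_reach (T : PTree V) {a b : V}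
    (h : Relation.ReflTransGen (fun x y => T.parent x = some y) a b) :
    ∃ m, (g T)^[m] (some a) = some b := by
  induction h with
  | refl => exact ⟨0, rfl⟩
  | tail hab hstep ih =>
    obtain ⟨m, hm⟩ := ih
    exact ⟨m + 1, by rw [Function.iterate_succ_apply', hm]; simpa [g] using hstep⟩

lemma hterm (T : PTree V) (v : V) : ∃ n, (g T)^[n] (some v) = none := by
  obtain ⟨m, hm⟩ := iter_reach T (T.connected v)
  exact ⟨m + 1, by rw [Function.iterate_succ_apply', hm]; simp [g, T.root_parent]⟩

/-- Depth of a vertex: the distance to `none` along the parent chain. -/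
noncomputable def depth (T : PTree V) (v : V) : ℕ :=
  @Nat.find _ (Classical.decPred _) (hterm T v)

lemma depth_spec (T : PTree V) (v : V) : (g T)^[depth T v] (some v) = none :=
  @Nat.find_spec _ (Classical.decPred _) (hterm T v)

lemma depth_min (T : PTree V) {v : V} {n : ℕ} (h : (g T)^[n] (some v) = none) :
    depth T v ≤ n :=
  @Nat.find_min' _ (Classical.decPred _) (hterm T v) n h

lemma depth_parent (T : PTree V) {v c : V} (hp : T.parent v = some c) :
    depth T v = depth T c + 1 := by
  have hshift : ∀ n, (g T)^[n + 1] (some v) = (g T)^[n] (some c) := by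
    intro n; rw [Function.iterate_succ_apply]; simp [g, hp]
  have h1 : depth T v ≤ depth T c + 1 :=
    depth_min T (by rw [hshift]; exact depth_spec T c)
  have hne : depth T v ≠ 0 := by
    intro h0
    have := depth_spec T v
    rw [h0] at this
    simp at this
  obtain ⟨k, hk⟩ := Nat.exists_eq_succ_of_ne_zero hne
  have h2 : depth T c ≤ k := by
    apply depth_min
    rw [← hshift k]
    have hs := depth_spec T v
    rw [hk] at hs
    exact hs
  omega

lemma depth_anc (T : PTree V) {a b : V} (h : T.anc a b) : depth T b ≤ depth T a := by
  induction h with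
  | refl => exact le_refl _
  | tail hab hstep ih =>
    have := depth_parent T hstep
    omega

lemma anc_eq_of_depth_le (T : PTree V) {a b : V} (h : T.anc a b)
    (hd : depth T a ≤ depth T b) : a = b := by
  rcases h.cases_head with rfl | ⟨p, hstep, hpb⟩
  · rfl
  · have h1 := depth_parent T hstep
    have h2 := depth_anc T hpb
    omega

lemma anc_total (T : PTree V) {b c : V} : ∀ {a}, T.anc a b → T.anc a c →
    T.anc b c ∨ T.anc c b := by
  intro a hab
  induction hab using Relation.ReflTransGen.head_induction_on with
  | refl => exact fun h => Or.inl h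
  | head hstep hrest ih =>
    intro hac
    rcases hac.cases_head with rfl | ⟨q, hq, hqc⟩
    · exact Or.inr (Relation.ReflTransGen.head hstep hrest)
    · have hpq := step_det T hstep hq
      subst hpq
      exact ih hqc

lemma exists_lca [Fintype V] (T : PTree V) (x y : V) : ∃ w, T.isLCA w x y := by
  classical
  set S := Finset.univ.filter (fun v => T.anc x v ∧ T.anc y v) with hS
  have hroot : T.root ∈ S := by
    simp only [hS, Finset.mem_filter, Finset.mem_univ, true_and]
    exact ⟨T.connected x, T.connected y⟩
  obtain ⟨w, hwS, hmax⟩ := S.exists_max_image (depth T) ⟨_, hroot⟩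
  simp only [hS, Finset.mem_filter, Finset.mem_univ, true_and] at hwS
  refine ⟨w, hwS.1, hwS.2, ?_⟩
  intro v hxv hyv
  rcases anc_total T hwS.1 hxv with h | h
  · exact h
  · have hvS : v ∈ S := by
      simp only [hS, Finset.mem_filter, Finset.mem_univ, true_and]
      exact ⟨hxv, hyv⟩
    have hd : depth T v ≤ depth T w := hmax v hvS
    have : v = w := anc_eq_of_depth_le T h hd
    subst this
    exact Relation.ReflTransGen.refl

section Contraction

variable (T : PTree V) (A : Set V) (TA : PTree {w : V // w ∉ A})

lemma chain_anc {a b : V}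
    (h : Relation.ReflTransGen (multiContractStep T A) a b) : T.anc a b :=
  Relation.ReflTransGen.mono (r := multiContractStep T A) (p := fun x y => T.parent x = some y)
    (fun _ _ hc => hc.1) _ _ h

lemma chain_out {w b : V}
    (h : Relation.ReflTransGen (multiContractStep T A) w b) (hb : b ∉ A) : w = b := by
  rcases h.cases_tail with h' | ⟨c, _, hstep⟩
  · exact h'.symm
  · exact absurd hstep.2 hb

variable (hTA : ∀ (w p : {w : V // w ∉ A}),
      TA.parent w = some p ↔
        ∃ a : V, Relation.ReflTransGen (multiContractStep T A) w.1 a ∧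
          T.parent a = some p.1)

include hTA

lemma proj_anc {a b : {w : V // w ∉ A}} (h : TA.anc a b) : T.anc a.1 b.1 := by
  induction h with
  | refl => exact Relation.ReflTransGen.refl
  | tail hab hstep ih =>
    obtain ⟨c, hc1, hc2⟩ := (hTA _ _).1 hstep
    exact ih.trans ((chain_anc T A hc1).tail hc2)

lemma lift_anc_aux {b : V} (hb : b ∉ A) {a : V} (hab : T.anc a b) :
    ∀ w (hw : w ∉ A), Relation.ReflTransGen (multiContractStep T A) w a →
      TA.anc ⟨w, hw⟩ ⟨b, hb⟩ := by
  induction hab using Relation.ReflTransGen.head_induction_on with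
  | refl =>
    intro w hw hchain
    have hwb : w = b := chain_out T A hchain hb
    subst hwb
    exact Relation.ReflTransGen.refl
  | @head a' c hstep hrest ih =>
    intro w hw hchain
    by_cases hc : c ∈ A
    · exact ih w hw (hchain.tail ⟨hstep, hc⟩)
    · have hp : TA.parent ⟨w, hw⟩ = some ⟨c, hc⟩ :=
        (hTA _ _).2 ⟨a', hchain, hstep⟩
      exact Relation.ReflTransGen.head hp (ih c hc Relation.ReflTransGen.refl)

lemma lift_anc {a b : {w : V // w ∉ A}} (h : T.anc a.1 b.1) : TA.anc a b := by
  obtain ⟨a, ha⟩ := a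
  obtain ⟨b, hb⟩ := b
  exact lift_anc_aux T A TA hTA hb h a ha Relation.ReflTransGen.refl

lemma lift_leaf {l : {w : V // w ∉ A}} (h : T.isLeaf l.1) : TA.isLeaf l := by
  intro w hw
  obtain ⟨a, _, ha⟩ := (hTA _ _).1 hw
  exact h a ha

lemma proj_leaf [Fintype V] (hA : ∀ v ∈ A, ¬ T.isLeaf v ∧ ∃ p, T.parent v = some p ∧ p ≠ T.root)
    {l : {w : V // w ∉ A}} (h : TA.isLeaf l) : T.isLeaf l.1 := by
  intro w hw
  classical
  set S := Finset.univ.filter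
    (fun d => Relation.ReflTransGen (multiContractStep T A) d w) with hS
  have hwS : w ∈ S := by
    simp only [hS, Finset.mem_filter, Finset.mem_univ, true_and]
    exact Relation.ReflTransGen.refl
  obtain ⟨d, hdS, hmax⟩ := S.exists_max_image (depth T) ⟨_, hwS⟩
  simp only [hS, Finset.mem_filter, Finset.mem_univ, true_and] at hdS
  by_cases hd : d ∈ A
  · have hnl := (hA d hd).1
    simp only [PTree.isLeaf, not_forall, not_not] at hnl
    obtain ⟨d', hd'⟩ := hnl
    have hd'S : d' ∈ S := by
      simp only [hS, Finset.mem_filter, Finset.mem_univ, true_and]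
      exact Relation.ReflTransGen.head ⟨hd', hd⟩ hdS
    have h1 : depth T d' ≤ depth T d := hmax d' hd'S
    have h2 := depth_parent T hd'
    omega
  · have hp : TA.parent ⟨d, hd⟩ = some l := (hTA _ _).2 ⟨w, hdS, hw⟩
    exact h _ hp

end Contraction

end Stmt6Aux

/-- If `T_A` is obtained from `(T,σ)` by contracting all edges in a
set `A` of inner edges (identified by their lower endpoints), then every arc of
`G(T,σ)` is also an arc of `G(T_A,σ)`. -/
theorem stmt_6 {V C : Type*} [Fintype V] (T : PTree V) (σ : V → C) (A : Set V)
    (hA : ∀ v ∈ A, ¬ T.isLeaf v ∧ ∃ p, T.parent v = some p ∧ p ≠ T.root)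
    (TA : PTree {w : V // w ∉ A})
    (hTA : ∀ (w p : {w : V // w ∉ A}),
      TA.parent w = some p ↔
        ∃ a : V, Relation.ReflTransGen (multiContractStep T A) w.1 a ∧
          T.parent a = some p.1)
    (x y : {w : V // w ∉ A}) (h : T.bestMatch σ x.1 y.1) :
    TA.bestMatch (fun z => σ z.1) x y := by
  obtain ⟨hxl, hyl, hcol, hmin⟩ := h
  refine ⟨Stmt6Aux.lift_leaf T A TA hTA hxl, Stmt6Aux.lift_leaf T A TA hTA hyl, hcol, ?_⟩
  intro y' hy'leaf hcolor u u' hu hu'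
  have hy'T : T.isLeaf y'.1 := Stmt6Aux.proj_leaf T A TA hTA hA hy'leaf
  obtain ⟨w, hw⟩ := Stmt6Aux.exists_lca T x.1 y.1
  obtain ⟨w', hw'⟩ := Stmt6Aux.exists_lca T x.1 y'.1
  have hww' : T.anc w w' := hmin y'.1 hy'T hcolor w w' hw hw'
  have hxu' : T.anc x.1 u'.1 := Stmt6Aux.proj_anc T A TA hTA hu'.1
  have hy'u' : T.anc y'.1 u'.1 := Stmt6Aux.proj_anc T A TA hTA hu'.2.1
  have hw'u' : T.anc w' u'.1 := hw'.2.2 u'.1 hxu' hy'u'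
  have hxw' : T.anc x.1 u'.1 := (hw'.1.trans hw'u')
  have hyw' : T.anc y.1 u'.1 := ((hw.2.1.trans hww').trans hw'u')
  have hx : TA.anc x u' := Stmt6Aux.lift_anc T A TA hTA hxw'
  have hy : TA.anc y u' := Stmt6Aux.lift_anc T A TA hTA hyw'
  exact hu.2.2 u' hx hy
end

section
/- Let (𝔾,σ) be a BMG containing an hourglass [xy ⋈ x'y'], and let (T,σ) be any tree explaining (𝔾,σ). Then T contains an inner vertex u with three distinct children v₁, v₂, v₃ such that x ⪯ v₁, lca_T(x',y') ⪯ v₂, and y ⪯ v₃. -/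
namespace PTree

variable {V C : Type*} (T : PTree V)

lemma anc_comparable_s12 {a b c : V} (hab : T.anc a b) : T.anc a c → T.anc b c ∨ T.anc c b := by
  induction hab using Relation.ReflTransGen.head_induction_on with
  | refl => exact fun h => Or.inl h
  | head h hcb ih =>
    intro hac
    rcases Relation.ReflTransGen.cases_head hac with rfl | ⟨d, hd, hdc⟩
    · exact Or.inr (Relation.ReflTransGen.head h hcb)
    · obtain rfl := Option.some.inj (h.symm.trans hd)
      exact ih hdc

lemma acyclic_s12 : ∀ a : V, ∀ p, T.parent a = some p → ¬ T.anc p a := by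
  intro a
  induction T.connected a using Relation.ReflTransGen.head_induction_on with
  | refl =>
    intro p hp
    rw [T.root_parent] at hp
    exact absurd hp (by simp)
  | head h hcr ih =>
    intro p hp hpa
    obtain rfl := Option.some.inj (hp.symm.trans h)
    rcases Relation.ReflTransGen.cases_head hpa with rfl | ⟨d, hd, hda⟩
    · exact ih _ hp hpa
    · exact ih d hd (hda.tail h)

lemma anc_antisymm_s12 {a b : V} (hab : T.anc a b) (hba : T.anc b a) : a = b := by
  rcases Relation.ReflTransGen.cases_head hab with rfl | ⟨c, hc, hcb⟩
  · rfl
  · exact absurd (hcb.trans hba) (T.acyclic_s12 a c hc)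

lemma anc_leaf {a b : V} (hab : T.anc a b) : T.isLeaf b → a = b := by
  induction hab with
  | refl => exact fun _ => rfl
  | tail h1 h2 ih => exact fun hb => absurd h2 (hb _)

lemma lca_exists (a b : V) : ∃ w, T.isLCA w a b := by
  induction T.connected a using Relation.ReflTransGen.head_induction_on with
  | refl =>
    exact ⟨T.root, Relation.ReflTransGen.refl, T.connected b, fun w' h1 _ => h1⟩
  | head h hcr ih =>
    rename_i a' c
    by_cases hba : T.anc b a'
    · exact ⟨a', Relation.ReflTransGen.refl, hba, fun w' h1 _ => h1⟩
    · obtain ⟨w, hw1, hw2, hw3⟩ := ih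
      refine ⟨w, Relation.ReflTransGen.head h hw1, hw2, ?_⟩
      intro w' ha' hb'
      rcases Relation.ReflTransGen.cases_head ha' with rfl | ⟨d, hd, hdw'⟩
      · exact absurd hb' hba
      · obtain rfl := Option.some.inj (h.symm.trans hd)
        exact hw3 w' hdw' hb'

lemma lca_unique_s12 {u u' a b : V} (h : T.isLCA u a b) (h' : T.isLCA u' a b) : u = u' :=
  T.anc_antisymm_s12 (h.2.2 u' h'.1 h'.2.1) (h'.2.2 u h.1 h.2.1)

lemma isLCA_symm {u a b : V} (h : T.isLCA u a b) : T.isLCA u b a :=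
  ⟨h.2.1, h.1, fun w hb ha => h.2.2 w ha hb⟩

lemma exists_child_anc {a u : V} (h : T.anc a u) (hne : a ≠ u) :
    ∃ v, T.child v u ∧ T.anc a v := by
  have key : ∀ {a}, T.anc a u → a = u ∨ ∃ v, T.child v u ∧ T.anc a v := by
    intro a h
    induction h using Relation.ReflTransGen.head_induction_on with
    | refl => exact Or.inl rfl
    | head h' hrest ih =>
      rcases ih with rfl | ⟨v, hv, hav⟩
      · exact Or.inr ⟨_, h', Relation.ReflTransGen.refl⟩
      · exact Or.inr ⟨v, hv, Relation.ReflTransGen.head h' hav⟩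
  rcases key h with rfl | hv
  · exact absurd rfl hne
  · exact hv

end PTree

/-- If a BMG `(𝔾,σ)` contains an hourglass `[xy ⋈ x'y']`, then any
tree `(T,σ)` explaining it contains an inner vertex `u` with three distinct
children `v₁, v₂, v₃` such that `x ⪯ v₁`, `lca(x',y') ⪯ v₂` and `y ⪯ v₃`. -/
theorem stmt_12 {V L C : Type*} [Fintype V] (T : PTree V) (ι : L → V)
    (σT : V → C) (σ : L → C) (E : L → L → Prop)
    (hexp : Explains T ι σT σ E)
    (x x' y y' : L)
    (hd1 : x ≠ x') (hd2 : x ≠ y) (hd3 : x ≠ y') (hd4 : x' ≠ y) (hd5 : x' ≠ y')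
    (hd6 : y ≠ y')
    (hc1 : σ x = σ x') (hc2 : σ y = σ y') (hc3 : σ x ≠ σ y)
    (he1 : E x y ∧ E y x) (he2 : E x' y' ∧ E y' x')
    (ha1 : E x y') (ha2 : E y x')
    (hn1 : ¬ E y' x) (hn2 : ¬ E x' y) :
    ∃ u v₁ v₂ v₃ w, v₁ ≠ v₂ ∧ v₁ ≠ v₃ ∧ v₂ ≠ v₃ ∧
      T.child v₁ u ∧ T.child v₂ u ∧ T.child v₃ u ∧
      T.anc (ι x) v₁ ∧ T.isLCA w (ι x') (ι y') ∧ T.anc w v₂ ∧ T.anc (ι y) v₃ := by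
  obtain ⟨ιinj, hleafι, -, hσ, hEiff⟩ := hexp
  have bmXY := (hEiff x y).mp he1.1
  have bmYX := (hEiff y x).mp he1.2
  have bmY'X' := (hEiff y' x').mp he2.2
  have bmXY' := (hEiff x y').mp ha1
  have bmYX' := (hEiff y x').mp ha2
  have nbm : ¬ T.bestMatch σT (ι y') (ι x) := fun h => hn1 ((hEiff y' x).mpr h)
  have cYY' : σT (ι y') = σT (ι y) := by rw [hσ, hσ, hc2]
  have cXX' : σT (ι x') = σT (ι x) := by rw [hσ, hσ, hc1]
  have cY'X : σT (ι y') ≠ σT (ι x) := by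
    rw [hσ, hσ, ← hc2]; exact Ne.symm hc3
  -- u = lca(x,y)
  obtain ⟨u, hu⟩ := T.lca_exists (ι x) (ι y)
  -- lca(x,y') = u
  obtain ⟨u', hu'⟩ := T.lca_exists (ι x) (ι y')
  have huu' : u = u' := T.anc_antisymm_s12
    (bmXY.2.2.2 (ι y') (hleafι y') cYY' u u' hu hu')
    (bmXY'.2.2.2 (ι y) (hleafι y) cYY'.symm u' u hu' hu)
  rw [← huu'] at hu'
  -- lca(y,x') = u
  obtain ⟨ua, hua⟩ := T.lca_exists (ι y) (ι x')
  have huua : u = ua := T.anc_antisymm_s12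
    (bmYX.2.2.2 (ι x') (hleafι x') cXX' u ua (T.isLCA_symm hu) hua)
    (bmYX'.2.2.2 (ι x) (hleafι x) cXX'.symm ua u hua (T.isLCA_symm hu))
  rw [← huua] at hua
  -- from ¬ E y' x obtain a witness z of color σ(x) with lca(y',z) strictly below u
  have key : ∃ z, T.isLeaf z ∧ σT z = σT (ι x) ∧
      ∃ w1 w2, T.isLCA w1 (ι y') (ι x) ∧ T.isLCA w2 (ι y') z ∧ ¬ T.anc w1 w2 := by
    by_contra hcon
    push_neg at hcon
    exact nbm ⟨hleafι y', hleafι x, cY'X, hcon⟩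
  obtain ⟨z, hzleaf, hzc, w1, w2, hw1, hw2, hnanc⟩ := key
  obtain rfl : w1 = u := T.lca_unique_s12 hw1 (T.isLCA_symm hu')
  have hw2u : T.anc w2 w1 := by
    rcases T.anc_comparable_s12 hw2.1 (T.isLCA_symm hu').1 with h | h
    · exact h
    · exact absurd h hnanc
  have hw2ne : w2 ≠ w1 := by rintro rfl; exact hnanc Relation.ReflTransGen.refl
  -- w = lca(x',y') satisfies w ⪯ w2 ≺ u
  obtain ⟨w, hw⟩ := T.lca_exists (ι x') (ι y')
  have hww2 : T.anc w w2 :=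
    bmY'X'.2.2.2 z hzleaf (hzc.trans cXX'.symm) w w2 (T.isLCA_symm hw) hw2
  have hwu : T.anc w w1 := hww2.trans hw2u
  have hwne : w ≠ w1 := by
    rintro rfl
    exact hw2ne (T.anc_antisymm_s12 hw2u hww2)
  -- x and y are strictly below u
  have hXne : ι x ≠ w1 := by
    intro h
    rw [← h] at hu
    exact hd2 (ιinj (T.anc_leaf hu.2.1 (hleafι x)).symm)
  have hYne : ι y ≠ w1 := by
    intro h
    rw [← h] at hu
    exact hd2 (ιinj (T.anc_leaf hu.1 (hleafι y)))
  obtain ⟨v1, hv1c, hv1x⟩ := T.exists_child_anc hu.1 hXne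
  obtain ⟨v3, hv3c, hv3y⟩ := T.exists_child_anc hu.2.1 hYne
  obtain ⟨v2, hv2c, hv2w⟩ := T.exists_child_anc hwu hwne
  have h13 : v1 ≠ v3 := by
    rintro rfl
    exact T.acyclic_s12 v1 w1 hv1c (hu.2.2 v1 hv1x hv3y)
  have h12 : v1 ≠ v2 := by
    rintro rfl
    exact T.acyclic_s12 v1 w1 hv1c (hu'.2.2 v1 hv1x (hw.2.1.trans hv2w))
  have h23 : v2 ≠ v3 := by
    rintro rfl
    exact T.acyclic_s12 v2 w1 hv2c (hua.2.2 v2 hv3y (hw.1.trans hv2w))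
  exact ⟨w1, v1, v2, v3, w, h12, h13, h23, hv1c, hv2c, hv3c, hv1x, hw, hv2w, hv3y⟩
end

section
/- Every hourglass graph is a BMG: the colored digraph on vertices {x, x', y, y'} with σ(x)=σ(x')≠σ(y)=σ(y'), edges xy and x'y', arcs (x,y') and (y,x'), and no arcs (y',x), (x',y), is explained by the tree with root ρ having three children v₁, v₂, v₃, where v₁ = x, v₃ = y are leaves and v₂ is an inner vertex with leaf children x' and y'. -/
/-- Every hourglass is a BMG: it is explained by the tree with
root `ρ` having children `x`, `v₂`, `y`, where `v₂` has leaf children `x'` and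
`y'`. The best-match arcs of this tree are exactly the arcs of the hourglass
`[xy ⋈ x'y']`. -/
theorem stmt_16 {V C : Type*} [Fintype V] (T : PTree V) (σ : V → C)
    (ρ v₂ x y x' y' : V)
    (hnodup : ([ρ, v₂, x, y, x', y'] : List V).Nodup)
    (hall : ∀ w : V, w = ρ ∨ w = v₂ ∨ w = x ∨ w = y ∨ w = x' ∨ w = y')
    (hroot : T.root = ρ)
    (hpx : T.parent x = some ρ) (hpy : T.parent y = some ρ)
    (hpv : T.parent v₂ = some ρ)
    (hpx' : T.parent x' = some v₂) (hpy' : T.parent y' = some v₂)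
    (hc1 : σ x = σ x') (hc2 : σ y = σ y') (hc3 : σ x ≠ σ y) :
    ∀ a b : V, T.bestMatch σ a b ↔
      ((a = x ∧ b = y) ∨ (a = y ∧ b = x) ∨ (a = x' ∧ b = y') ∨ (a = y' ∧ b = x') ∨
        (a = x ∧ b = y') ∨ (a = y ∧ b = x')) := by
  have hPρ : T.parent ρ = none := hroot ▸ T.root_parent
  simp only [List.nodup_cons, List.mem_cons, List.mem_singleton, List.not_mem_nil,
    or_false, not_or, List.nodup_nil, and_true] at hnodup
  obtain ⟨⟨hρv, hρx, hρy, hρx', hρy'⟩, ⟨hvx, hvy, hvx', hvy'⟩, ⟨hxy, hxx', hxy'⟩,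
    ⟨hyx', hyy'⟩, hx'y', -⟩ := hnodup
  -- basic anc facts
  have ancρ : ∀ u, T.anc ρ u → u = ρ := by
    intro u h
    rcases Relation.ReflTransGen.cases_head h with h | ⟨b, hb, -⟩
    · exact h.symm
    · rw [hPρ] at hb; cases hb
  have ancStep : ∀ a p u, T.parent a = some p → T.anc a u → u = a ∨ T.anc p u := by
    intro a p u hp h
    rcases Relation.ReflTransGen.cases_head h with h | ⟨b, hb, hb2⟩
    · exact Or.inl h.symm
    · rw [hp] at hb; injection hb with hb; subst hb; exact Or.inr hb2
  have ancv : ∀ u, T.anc v₂ u → u = v₂ ∨ u = ρ := by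
    intro u h
    rcases ancStep v₂ ρ u hpv h with h | h
    · exact Or.inl h
    · exact Or.inr (ancρ u h)
  have ancx : ∀ u, T.anc x u → u = x ∨ u = ρ := by
    intro u h
    rcases ancStep x ρ u hpx h with h | h
    · exact Or.inl h
    · exact Or.inr (ancρ u h)
  have ancy : ∀ u, T.anc y u → u = y ∨ u = ρ := by
    intro u h
    rcases ancStep y ρ u hpy h with h | h
    · exact Or.inl h
    · exact Or.inr (ancρ u h)
  have ancx' : ∀ u, T.anc x' u → u = x' ∨ u = v₂ ∨ u = ρ := by
    intro u h
    rcases ancStep x' v₂ u hpx' h with h | h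
    · exact Or.inl h
    · exact Or.inr (ancv u h)
  have ancy' : ∀ u, T.anc y' u → u = y' ∨ u = v₂ ∨ u = ρ := by
    intro u h
    rcases ancStep y' v₂ u hpy' h with h | h
    · exact Or.inl h
    · exact Or.inr (ancv u h)
  have axρ : T.anc x ρ := Relation.ReflTransGen.single hpx
  have ayρ : T.anc y ρ := Relation.ReflTransGen.single hpy
  have avρ : T.anc v₂ ρ := Relation.ReflTransGen.single hpv
  have ax'v : T.anc x' v₂ := Relation.ReflTransGen.single hpx'
  have ay'v : T.anc y' v₂ := Relation.ReflTransGen.single hpy'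
  have ax'ρ : T.anc x' ρ := ax'v.trans avρ
  have ay'ρ : T.anc y' ρ := ay'v.trans avρ
  -- leaves
  have leafAux : ∀ v, v ≠ ρ → v ≠ v₂ → T.isLeaf v := by
    intro v hv1 hv2 w hw
    have hw' : T.parent w = some v := hw
    rcases hall w with rfl | rfl | rfl | rfl | rfl | rfl
    · rw [hPρ] at hw'; cases hw'
    · rw [hpv] at hw'; injection hw' with h; exact hv1 h.symm
    · rw [hpx] at hw'; injection hw' with h; exact hv1 h.symm
    · rw [hpy] at hw'; injection hw' with h; exact hv1 h.symm
    · rw [hpx'] at hw'; injection hw' with h; exact hv2 h.symm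
    · rw [hpy'] at hw'; injection hw' with h; exact hv2 h.symm
  have leafx : T.isLeaf x := leafAux x (fun h => hρx h.symm) (fun h => hvx h.symm)
  have leafy : T.isLeaf y := leafAux y (fun h => hρy h.symm) (fun h => hvy h.symm)
  have leafx' : T.isLeaf x' := leafAux x' (fun h => hρx' h.symm) (fun h => hvx' h.symm)
  have leafy' : T.isLeaf y' := leafAux y' (fun h => hρy' h.symm) (fun h => hvy' h.symm)
  have leafMem : ∀ v, T.isLeaf v → v = x ∨ v = y ∨ v = x' ∨ v = y' := by
    intro v hv
    rcases hall v with rfl | rfl | rfl | rfl | rfl | rfl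
    · exact absurd hpx (hv x)
    · exact absurd hpx' (hv x')
    · exact Or.inl rfl
    · exact Or.inr (Or.inl rfl)
    · exact Or.inr (Or.inr (Or.inl rfl))
    · exact Or.inr (Or.inr (Or.inr rfl))
  -- colors of leaves
  have colorY : ∀ l, T.isLeaf l → σ l = σ y → l = y ∨ l = y' := by
    intro l hl hc
    rcases leafMem l hl with h | h | h | h
    · rw [h] at hc; exact absurd hc hc3
    · exact Or.inl h
    · rw [h] at hc; exact absurd (hc1.trans hc) hc3
    · exact Or.inr h
  have colorX : ∀ l, T.isLeaf l → σ l = σ x → l = x ∨ l = x' := by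
    intro l hl hc
    rcases leafMem l hl with h | h | h | h
    · exact Or.inl h
    · rw [h] at hc; exact absurd hc.symm hc3
    · exact Or.inr h
    · rw [h] at hc; exact absurd (hc2.trans hc).symm hc3
  -- LCA classification
  have lcaSymm : ∀ u a b, T.isLCA u a b → T.isLCA u b a :=
    fun u a b ⟨h1, h2, h3⟩ => ⟨h2, h1, fun w hw1 hw2 => h3 w hw2 hw1⟩
  have lca_xy : ∀ u, T.isLCA u x y → u = ρ := by
    rintro u ⟨h1, h2, -⟩
    rcases ancx u h1 with h | h
    · exfalso; rw [h] at h2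
      rcases ancy x h2 with h' | h'
      · exact hxy h'
      · exact hρx h'.symm
    · exact h
  have lca_xy' : ∀ u, T.isLCA u x y' → u = ρ := by
    rintro u ⟨h1, h2, -⟩
    rcases ancx u h1 with h | h
    · exfalso; rw [h] at h2
      rcases ancy' x h2 with h' | h' | h'
      · exact hxy' h'
      · exact hvx h'.symm
      · exact hρx h'.symm
    · exact h
  have lca_x'y : ∀ u, T.isLCA u x' y → u = ρ := by
    rintro u ⟨h1, h2, -⟩
    rcases ancy u h2 with h | h
    · exfalso; rw [h] at h1
      rcases ancx' y h1 with h' | h' | h'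
      · exact hyx' h'
      · exact hvy h'.symm
      · exact hρy h'.symm
    · exact h
  have lca_x'y' : ∀ u, T.isLCA u x' y' → u = v₂ := by
    rintro u ⟨h1, h2, h3⟩
    rcases ancx' u h1 with h | h | h
    · exfalso; rw [h] at h2
      rcases ancy' x' h2 with h' | h' | h'
      · exact hx'y' h'
      · exact hvx' h'.symm
      · exact hρx' h'.symm
    · exact h
    · exfalso; rw [h] at h3
      exact hρv (ancρ v₂ (h3 v₂ ax'v ay'v)).symm
  -- LCA existence
  have lcaρ_xy : T.isLCA ρ x y := by
    refine ⟨axρ, ayρ, fun w hw1 hw2 => ?_⟩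
    rcases ancx w hw1 with h | h
    · exfalso; rw [h] at hw2
      rcases ancy x hw2 with h' | h'
      · exact hxy h'
      · exact hρx h'.symm
    · rw [h]; exact Relation.ReflTransGen.refl
  have lcaρ_xy' : T.isLCA ρ x y' := by
    refine ⟨axρ, ay'ρ, fun w hw1 hw2 => ?_⟩
    rcases ancx w hw1 with h | h
    · exfalso; rw [h] at hw2
      rcases ancy' x hw2 with h' | h' | h'
      · exact hxy' h'
      · exact hvx h'.symm
      · exact hρx h'.symm
    · rw [h]; exact Relation.ReflTransGen.refl
  have lcaρ_x'y : T.isLCA ρ x' y := by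
    refine ⟨ax'ρ, ayρ, fun w hw1 hw2 => ?_⟩
    rcases ancy w hw2 with h | h
    · exfalso; rw [h] at hw1
      rcases ancx' y hw1 with h' | h' | h'
      · exact hyx' h'
      · exact hvy h'.symm
      · exact hρy h'.symm
    · rw [h]; exact Relation.ReflTransGen.refl
  have lcav_x'y' : T.isLCA v₂ x' y' := by
    refine ⟨ax'v, ay'v, fun w hw1 hw2 => ?_⟩
    rcases ancx' w hw1 with h | h | h
    · exfalso; rw [h] at hw2
      rcases ancy' x' hw2 with h' | h' | h'
      · exact hx'y' h'
      · exact hvx' h'.symm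
      · exact hρx' h'.symm
    · rw [h]; exact Relation.ReflTransGen.refl
    · rw [h]; exact avρ
  -- best matches
  have bmxy : T.bestMatch σ x y := by
    refine ⟨leafx, leafy, hc3, fun l hl hcl u u' hu hu' => ?_⟩
    rcases colorY l hl hcl with h | h
    · rw [h] at hu'; rw [lca_xy u hu, lca_xy u' hu']; exact Relation.ReflTransGen.refl
    · rw [h] at hu'; rw [lca_xy u hu, lca_xy' u' hu']; exact Relation.ReflTransGen.refl
  have bmyx : T.bestMatch σ y x := by
    refine ⟨leafy, leafx, fun h => hc3 h.symm, fun l hl hcl u u' hu hu' => ?_⟩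
    rcases colorX l hl hcl with h | h
    · rw [h] at hu'
      rw [lca_xy u (lcaSymm u y x hu), lca_xy u' (lcaSymm u' y x hu')]; exact Relation.ReflTransGen.refl
    · rw [h] at hu'
      rw [lca_xy u (lcaSymm u y x hu), lca_x'y u' (lcaSymm u' y x' hu')]; exact Relation.ReflTransGen.refl
  have bmx'y' : T.bestMatch σ x' y' := by
    refine ⟨leafx', leafy', fun h => hc3 (hc1.trans (h.trans hc2.symm)),
      fun l hl hcl u u' hu hu' => ?_⟩
    rcases colorY l hl (hcl.trans hc2.symm) with h | h
    · rw [h] at hu'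
      rw [lca_x'y' u hu, lca_x'y u' hu']; exact avρ
    · rw [h] at hu'
      rw [lca_x'y' u hu, lca_x'y' u' hu']; exact Relation.ReflTransGen.refl
  have bmy'x' : T.bestMatch σ y' x' := by
    refine ⟨leafy', leafx', fun h => hc3 ((hc1.trans h.symm).trans hc2.symm),
      fun l hl hcl u u' hu hu' => ?_⟩
    rcases colorX l hl (hcl.trans hc1.symm) with h | h
    · rw [h] at hu'
      rw [lca_x'y' u (lcaSymm u y' x' hu), lca_xy' u' (lcaSymm u' y' x hu')]
      exact avρ
    · rw [h] at hu'
      rw [lca_x'y' u (lcaSymm u y' x' hu), lca_x'y' u' (lcaSymm u' y' x' hu')]; exact Relation.ReflTransGen.refl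
  have bmxy' : T.bestMatch σ x y' := by
    refine ⟨leafx, leafy', fun h => hc3 (h.trans hc2.symm),
      fun l hl hcl u u' hu hu' => ?_⟩
    rcases colorY l hl (hcl.trans hc2.symm) with h | h
    · rw [h] at hu'; rw [lca_xy' u hu, lca_xy u' hu']; exact Relation.ReflTransGen.refl
    · rw [h] at hu'; rw [lca_xy' u hu, lca_xy' u' hu']; exact Relation.ReflTransGen.refl
  have bmyx' : T.bestMatch σ y x' := by
    refine ⟨leafy, leafx', fun h => hc3 (hc1.trans h.symm),
      fun l hl hcl u u' hu hu' => ?_⟩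
    rcases colorX l hl (hcl.trans hc1.symm) with h | h
    · rw [h] at hu'
      rw [lca_x'y u (lcaSymm u y x' hu), lca_xy u' (lcaSymm u' y x hu')]; exact Relation.ReflTransGen.refl
    · rw [h] at hu'
      rw [lca_x'y u (lcaSymm u y x' hu), lca_x'y u' (lcaSymm u' y x' hu')]; exact Relation.ReflTransGen.refl
  -- non-best-matches
  have nbm1 : ¬ T.bestMatch σ x' y := by
    rintro ⟨-, -, -, h⟩
    have h' := h y' leafy' hc2.symm ρ v₂ lcaρ_x'y lcav_x'y'
    exact hρv (ancρ v₂ h').symm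
  have nbm2 : ¬ T.bestMatch σ y' x := by
    rintro ⟨-, -, -, h⟩
    have h' := h x' leafx' hc1.symm ρ v₂ (lcaSymm ρ x y' lcaρ_xy')
      (lcaSymm v₂ x' y' lcav_x'y')
    exact hρv (ancρ v₂ h').symm
  intro a b
  constructor
  · intro hbm
    have hla := hbm.1
    have hlb := hbm.2.1
    have hne := hbm.2.2.1
    rcases leafMem a hla with h1 | h1 | h1 | h1 <;>
      rcases leafMem b hlb with h2 | h2 | h2 | h2
    · exact absurd (by rw [h1, h2]) hne
    · exact Or.inl ⟨h1, h2⟩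
    · exact absurd (by rw [h1, h2]; exact hc1) hne
    · exact Or.inr (Or.inr (Or.inr (Or.inr (Or.inl ⟨h1, h2⟩))))
    · exact Or.inr (Or.inl ⟨h1, h2⟩)
    · exact absurd (by rw [h1, h2]) hne
    · exact Or.inr (Or.inr (Or.inr (Or.inr (Or.inr ⟨h1, h2⟩))))
    · exact absurd (by rw [h1, h2]; exact hc2) hne
    · exact absurd (by rw [h1, h2]; exact hc1.symm) hne
    · rw [h1, h2] at hbm; exact absurd hbm nbm1
    · exact absurd (by rw [h1, h2]) hne
    · exact Or.inr (Or.inr (Or.inl ⟨h1, h2⟩))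
    · rw [h1, h2] at hbm; exact absurd hbm nbm2
    · exact absurd (by rw [h1, h2]; exact hc2.symm) hne
    · exact Or.inr (Or.inr (Or.inr (Or.inl ⟨h1, h2⟩)))
    · exact absurd (by rw [h1, h2]) hne
  · intro h
    rcases h with ⟨h1, h2⟩ | ⟨h1, h2⟩ | ⟨h1, h2⟩ | ⟨h1, h2⟩ | ⟨h1, h2⟩ | ⟨h1, h2⟩ <;>
      rw [h1, h2]
    exacts [bmxy, bmyx, bmx'y', bmy'x', bmxy', bmyx']
end
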